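/- arXiv:1112.4130 — 5 statements merged into one kernel-verified Lean document; each statement's English description precedes it below -/
import Mathlib

section
/- The exponential density ρ(x) = β e^{-βx} satisfies, for all u ≥ 0, the stationary Boltzmann identity ρ(u) = ∫_u^∞ (1/x) ∫_0^x ρ(y) ρ(x−y) dy dx. -/
open MeasureTheory Real

/-- The exponential density ρ(x) = β e^{-βx} satisfies, for all u ≥ 0, the
stationary Boltzmann identity ρ(u) = ∫_u^∞ (1/x) ∫_0^x ρ(y) ρ(x−y) dy dx. -/
theorem exponential_density_stationary_boltzmann (β : ℝ) (hβ : 0 < β) (u : ℝ) (hu : 0 ≤ u) :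
    β * Real.exp (-(β * u)) =
      ∫ x in Set.Ioi u, (1 / x) *
        ∫ y in (0:ℝ)..x, (β * Real.exp (-(β * y))) * (β * Real.exp (-(β * (x - y)))) := by
  have h1 : ∀ x : ℝ, (∫ y in (0:ℝ)..x, (β * Real.exp (-(β * y))) * (β * Real.exp (-(β * (x - y)))))
      = x * (β ^ 2 * Real.exp (-(β * x))) := by
    intro x
    have : ∀ y : ℝ, (β * Real.exp (-(β * y))) * (β * Real.exp (-(β * (x - y))))
        = β ^ 2 * Real.exp (-(β * x)) := by
      intro y
      rw [mul_mul_mul_comm, ← Real.exp_add]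
      ring_nf
    simp_rw [this, intervalIntegral.integral_const, smul_eq_mul, sub_zero]
  have h2 : (∫ x in Set.Ioi u, (1 / x) *
        ∫ y in (0:ℝ)..x, (β * Real.exp (-(β * y))) * (β * Real.exp (-(β * (x - y)))))
      = ∫ x in Set.Ioi u, β ^ 2 * Real.exp (-(β * x)) := by
    apply setIntegral_congr_fun measurableSet_Ioi
    intro x hx
    have hx0 : x ≠ 0 := by
      have : 0 < x := lt_of_le_of_lt hu hx
      exact this.ne'
    dsimp only
    rw [h1 x]
    field_simp
  rw [h2]
  have h3 : (∫ x in Set.Ioi u, β ^ 2 * Real.exp (-(β * x)))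
      = β ^ 2 * ∫ x in Set.Ioi u, Real.exp (-(β * x)) := by
    rw [integral_const_mul]
  have h4 : (∫ x in Set.Ioi u, Real.exp (-(β * x)))
      = β⁻¹ * Real.exp (-(β * u)) := by
    have := integral_comp_mul_left_Ioi (fun x => Real.exp (-x)) u hβ
    simp only [smul_eq_mul] at this
    rw [this, integral_exp_neg_Ioi]
  rw [h3, h4]
  field_simp
end

section
/- For the shifted Gamma densities f_v(U) = (β^{ν_v}/Γ(ν_v)) (U − I_v)^{ν_v−1} e^{−β(U−I_v)} for U > I_v (and 0 otherwise), and rates a_{vw}(U) = (U − I_w)^{α_w} b_{vw} for U ≥ I_w (0 otherwise) with α_w = ν_w − 1, the detailed balance condition π_v f_v(U) a_{vw}(U) = π_w f_w(U) a_{wv}(U) holds for all U > max(I_v, I_w) if and only if π_v β^{ν_v} e^{β I_v} b_{vw} / Γ(ν_v) = π_w β^{ν_w} e^{β I_w} b_{wv} / Γ(ν_w). -/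
/-- For shifted Gamma densities and energy-dependent rates with α_w = ν_w − 1,
the detailed balance condition π_v f_v(U) a_{vw}(U) = π_w f_w(U) a_{wv}(U) for all
U > max(I_v,I_w) holds iff π_v β^{ν_v} e^{β I_v} b_{vw}/Γ(ν_v) = π_w β^{ν_w} e^{β I_w} b_{wv}/Γ(ν_w). -/
theorem detailed_balance_shifted_gamma_iff
    {V : Type*} (β : ℝ) (hβ : 0 < β) (I : V → ℝ) (ν : V → ℝ) (hν : ∀ v, 0 < ν v)
    (b : V → V → ℝ) (hb : ∀ v w, 0 < b v w) (π : V → ℝ) (hπ : ∀ v, 0 < π v)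
    (f : V → ℝ → ℝ)
    (hf : ∀ v U, f v U = if I v < U then
      β ^ (ν v) / Real.Gamma (ν v) * (U - I v) ^ (ν v - 1) * Real.exp (-β * (U - I v)) else 0)
    (a : V → V → ℝ → ℝ)
    (ha : ∀ v w U, a v w U = if I w ≤ U then (U - I w) ^ (ν w - 1) * b v w else 0)
    (v w : V) :
    (∀ U, max (I v) (I w) < U → π v * f v U * a v w U = π w * f w U * a w v U) ↔
      π v * β ^ (ν v) * Real.exp (β * I v) * b v w / Real.Gamma (ν v) =
        π w * β ^ (ν w) * Real.exp (β * I w) * b w v / Real.Gamma (ν w) := by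
  have hΓv := Real.Gamma_pos_of_pos (hν v)
  have hΓw := Real.Gamma_pos_of_pos (hν w)
  have key : ∀ U, max (I v) (I w) < U →
      (π v * f v U * a v w U =
        (π v * β ^ (ν v) * Real.exp (β * I v) * b v w / Real.Gamma (ν v)) *
          ((U - I v) ^ (ν v - 1) * (U - I w) ^ (ν w - 1) * Real.exp (-β * U)) ∧
       π w * f w U * a w v U =
        (π w * β ^ (ν w) * Real.exp (β * I w) * b w v / Real.Gamma (ν w)) *
          ((U - I v) ^ (ν v - 1) * (U - I w) ^ (ν w - 1) * Real.exp (-β * U))) := by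
    intro U hU
    have hv : I v < U := lt_of_le_of_lt (le_max_left _ _) hU
    have hw : I w < U := lt_of_le_of_lt (le_max_right _ _) hU
    rw [hf, hf, ha, ha, if_pos hv, if_pos hw, if_pos hw.le, if_pos hv.le]
    constructor
    · rw [show -β * (U - I v) = β * I v + -(β * U) by ring, Real.exp_add,
        show -β * U = -(β * U) by ring]
      field_simp
    · rw [show -β * (U - I w) = β * I w + -(β * U) by ring, Real.exp_add,
        show -β * U = -(β * U) by ring]
      field_simp
  constructor
  · intro h
    set U := max (I v) (I w) + 1 with hUdef
    have hU : max (I v) (I w) < U := lt_add_one _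
    obtain ⟨h1, h2⟩ := key U hU
    have heq := h U hU
    rw [h1, h2] at heq
    have hv : (0:ℝ) < U - I v := by
      have := lt_of_le_of_lt (le_max_left (I v) (I w)) hU; linarith
    have hw : (0:ℝ) < U - I w := by
      have := lt_of_le_of_lt (le_max_right (I v) (I w)) hU; linarith
    have hK : 0 < (U - I v) ^ (ν v - 1) * (U - I w) ^ (ν w - 1) * Real.exp (-β * U) := by
      positivity
    exact mul_right_cancel₀ hK.ne' heq
  · intro h U hU
    obtain ⟨h1, h2⟩ := key U hU
    rw [h1, h2, h]
end

section
/- Suppose ρ : [0,∞) → (0,∞) is a probability density satisfying ρ(T) = A₂ ρ(T + x₂) = A₃ ρ(T + x₃) for all T ≥ 0, where x₂, x₃ > 0 are incommensurable (x₂/x₃ is irrational) and A₂, A₃ > 0. If ρ is continuous, then ρ(T) = β e^{−βT} with β = (log A₂ − log A₃)/(x₂ − x₃), and moreover A₂^{x₃} = A₃^{x₂}. -/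
open Real MeasureTheory Set Filter

/-- A continuous positive probability density ρ on [0,∞) satisfying
ρ(T) = A₂ ρ(T + x₂) = A₃ ρ(T + x₃) with x₂/x₃ irrational must be exponential:
ρ(T) = β e^{−βT} with β = (log A₂ − log A₃)/(x₂ − x₃); moreover A₂^{x₃} = A₃^{x₂}. -/
theorem incommensurable_shifts_force_exponential
    (ρ : ℝ → ℝ) (x₂ x₃ A₂ A₃ : ℝ)
    (hx₂ : 0 < x₂) (hx₃ : 0 < x₃) (hA₂ : 0 < A₂) (hA₃ : 0 < A₃)
    (hirr : Irrational (x₂ / x₃))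
    (hpos : ∀ T, 0 ≤ T → 0 < ρ T)
    (hcont : ContinuousOn ρ (Set.Ici 0))
    (hdens : ∫ x in Set.Ioi (0:ℝ), ρ x = 1)
    (heq₂ : ∀ T, 0 ≤ T → ρ T = A₂ * ρ (T + x₂))
    (heq₃ : ∀ T, 0 ≤ T → ρ T = A₃ * ρ (T + x₃)) :
    (∀ T, 0 ≤ T →
        ρ T = ((Real.log A₂ - Real.log A₃) / (x₂ - x₃)) *
          Real.exp (-((Real.log A₂ - Real.log A₃) / (x₂ - x₃)) * T)) ∧
      A₂ ^ x₃ = A₃ ^ x₂ := by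
  set β : ℝ := Real.log A₂ / x₂ with hβdef
  set c : ℝ := β * x₃ - Real.log A₃ with hcdef
  set g : ℝ → ℝ := fun t => Real.log (ρ t) + β * t with hgdef
  have hβx₂ : β * x₂ = Real.log A₂ := by
    rw [hβdef, div_mul_cancel₀ _ hx₂.ne']
  have hρ₂ : ∀ t, 0 ≤ t → ρ (t + x₂) = ρ t / A₂ := fun t ht => by
    rw [eq_div_iff hA₂.ne', mul_comm]; exact (heq₂ t ht).symm
  have hρ₃ : ∀ t, 0 ≤ t → ρ (t + x₃) = ρ t / A₃ := fun t ht => by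
    rw [eq_div_iff hA₃.ne', mul_comm]; exact (heq₃ t ht).symm
  have hgx₂ : ∀ t, 0 ≤ t → g (t + x₂) = g t := by
    intro t ht
    simp only [hgdef]
    rw [hρ₂ t ht, Real.log_div (hpos t ht).ne' hA₂.ne', mul_add, hβx₂]
    ring
  have hgx₃ : ∀ t, 0 ≤ t → g (t + x₃) = g t + c := by
    intro t ht
    simp only [hgdef, hcdef]
    rw [hρ₃ t ht, Real.log_div (hpos t ht).ne' hA₃.ne', mul_add]
    ring
  have hgcont : ContinuousOn g (Set.Ici 0) := by
    apply ContinuousOn.add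
    · exact ContinuousOn.log hcont (fun x hx => (hpos x hx).ne')
    · exact (continuous_const.mul continuous_id).continuousOn
  -- iterate the x₂-period forward
  have hkey : ∀ s, 0 ≤ s → ∀ k : ℕ, g (s + k * x₂) = g s := by
    intro s hs k
    induction k with
    | zero => simp
    | succ k ih =>
      have h1 : s + ((k:ℕ)+1 : ℕ) * x₂ = (s + (k:ℕ) * x₂) + x₂ := by push_cast; ring
      rw [h1, hgx₂ _ (add_nonneg hs (by positivity))]
      exact ih
  -- the extension of g to all of ℝ
  set N : ℝ → ℕ := fun t => ⌈(max 0 (-t)) / x₂⌉₊ with hNdef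
  set G : ℝ → ℝ := fun t => g (t + N t * x₂) with hGdef
  have hN : ∀ t, 0 ≤ t + N t * x₂ := by
    intro t
    have h1 : max 0 (-t) / x₂ ≤ (N t : ℝ) := Nat.le_ceil _
    have h2 : -t ≤ max 0 (-t) := le_max_right _ _
    rw [div_le_iff₀ hx₂] at h1
    linarith
  have hwd' : ∀ t, ∀ n m : ℕ, n ≤ m → 0 ≤ t + n * x₂ → g (t + m * x₂) = g (t + n * x₂) := by
    intro t n m hnm h
    obtain ⟨k, rfl⟩ := Nat.exists_eq_add_of_le hnm
    have h1 : t + ((n + k : ℕ) : ℝ) * x₂ = (t + (n:ℕ) * x₂) + (k:ℕ) * x₂ := by push_cast; ring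
    rw [h1, hkey _ h k]
  have hG : ∀ t, ∀ n : ℕ, 0 ≤ t + n * x₂ → G t = g (t + n * x₂) := by
    intro t n hn
    rcases le_total (N t) n with h | h
    · exact (hwd' t (N t) n h (hN t)).symm
    · exact hwd' t n (N t) h hn
  have hGcont : Continuous G := by
    rw [continuous_iff_continuousAt]
    intro t₀
    set n : ℕ := N t₀ + 1 with hn
    have hpos' : 0 < t₀ + (n : ℝ) * x₂ := by
      have h1 := hN t₀
      have h2 : t₀ + (n:ℝ) * x₂ = (t₀ + (N t₀ : ℝ) * x₂) + x₂ := by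
        rw [hn]; push_cast; ring
      linarith
    have hc1 : ContinuousAt (fun t => g (t + (n:ℝ) * x₂)) t₀ := by
      have hca : ContinuousAt g (t₀ + (n:ℝ) * x₂) :=
        hgcont.continuousAt (Ici_mem_nhds hpos')
      exact ContinuousAt.comp (g := g) hca ((continuous_add_right ((n:ℝ) * x₂)).continuousAt)
    apply hc1.congr
    filter_upwards [eventually_gt_nhds (show -((n:ℝ) * x₂) < t₀ by linarith)] with t ht
    exact (hG t n (by linarith)).symm
  have hGx₂ : Function.Periodic G x₂ := by
    intro t
    have h0 := hN t
    have e1 : G (t + x₂) = g ((t + x₂) + N t * x₂) := hG (t + x₂) (N t) (by linarith)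
    have e2 : G t = g (t + N t * x₂) := hG t (N t) h0
    rw [e1, e2]
    have h1 : (t + x₂) + (N t : ℝ) * x₂ = (t + (N t : ℝ) * x₂) + x₂ := by ring
    rw [h1, hgx₂ _ h0]
  have hGx₃ : ∀ t, G (t + x₃) = G t + c := by
    intro t
    have h0 := hN t
    have e1 : G (t + x₃) = g ((t + x₃) + N t * x₂) := hG (t + x₃) (N t) (by linarith)
    have e2 : G t = g (t + N t * x₂) := hG t (N t) h0
    rw [e1, e2]
    have h1 : (t + x₃) + (N t : ℝ) * x₂ = (t + (N t : ℝ) * x₂) + x₃ := by ring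
    rw [h1, hgx₃ _ h0]
  obtain ⟨C, hC⟩ := (isCompact_Icc : IsCompact (Icc (0:ℝ) x₂)).exists_bound_of_continuousOn
    hGcont.continuousOn
  have hbound : ∀ t, |G t| ≤ C := by
    intro t
    obtain ⟨y, hy, hty⟩ := hGx₂.exists_mem_Ico₀ hx₂ t
    rw [hty, ← Real.norm_eq_abs]
    exact hC y ⟨hy.1, hy.2.le⟩
  have hGn : ∀ n : ℕ, G ((n:ℝ) * x₃) = G 0 + (n:ℝ) * c := by
    intro n
    induction n with
    | zero => simp
    | succ n ih =>
      have h1 : (((n:ℕ)+1 : ℕ) : ℝ) * x₃ = (n:ℝ) * x₃ + x₃ := by push_cast; ring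
      rw [h1, hGx₃, ih]; push_cast; ring
  have hc0 : c = 0 := by
    by_contra hc
    have habs : 0 < |c| := abs_pos.mpr hc
    obtain ⟨n, hn⟩ := exists_nat_gt ((C + |G 0|) / |c|)
    have h1 := hbound ((n:ℝ) * x₃)
    rw [hGn n] at h1
    have h2 : |(n:ℝ) * c| = (n:ℝ) * |c| := by
      rw [abs_mul, Nat.abs_cast]
    have h3 : |(n:ℝ) * c| ≤ |G 0 + (n:ℝ) * c| + |G 0| := by
      calc |(n:ℝ) * c| = |(G 0 + (n:ℝ) * c) - G 0| := by ring_nf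
        _ ≤ |G 0 + (n:ℝ) * c| + |G 0| := abs_sub _ _
    rw [div_lt_iff₀ habs] at hn
    nlinarith
  have hGx₃p : Function.Periodic G x₃ := fun t => by rw [hGx₃ t, hc0, add_zero]
  -- density of the subgroup generated by x₂ and x₃
  have hdense : Dense ((AddSubgroup.closure ({x₂, x₃} : Set ℝ) : AddSubgroup ℝ) : Set ℝ) := by
    rcases AddSubgroup.dense_or_cyclic (AddSubgroup.closure ({x₂, x₃} : Set ℝ)) with h | ⟨a, ha⟩
    · exact h
    · exfalso
      have hx₂mem : x₂ ∈ AddSubgroup.closure ({x₂, x₃} : Set ℝ) :=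
        AddSubgroup.subset_closure (by simp)
      have hx₃mem : x₃ ∈ AddSubgroup.closure ({x₂, x₃} : Set ℝ) :=
        AddSubgroup.subset_closure (by simp)
      rw [ha, AddSubgroup.mem_closure_singleton] at hx₂mem hx₃mem
      obtain ⟨n, hn⟩ := hx₂mem
      obtain ⟨m, hm⟩ := hx₃mem
      have ha0 : a ≠ 0 := by
        rintro rfl; rw [smul_zero] at hm; exact hx₃.ne hm
      have hm0 : (m:ℝ) ≠ 0 := by
        rintro hm0
        rw [zsmul_eq_mul, hm0, zero_mul] at hm
        exact hx₃.ne hm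
      apply hirr
      refine ⟨(n : ℚ) / (m : ℚ), ?_⟩
      rw [← hn, ← hm, zsmul_eq_mul, zsmul_eq_mul]
      push_cast
      rw [mul_div_mul_right _ _ ha0]
  -- G is invariant under the subgroup
  have hinv : ∀ p ∈ AddSubgroup.closure ({x₂, x₃} : Set ℝ), ∀ t, G (t + p) = G t := by
    intro p hp
    induction hp using AddSubgroup.closure_induction with
    | mem x hx =>
      rcases hx with hx | hx
      · subst hx; exact hGx₂
      · simp only [Set.mem_singleton_iff] at hx; subst hx; exact hGx₃p
    | zero => intro t; simp
    | add p q _ _ hp hq =>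
      intro t
      have h1 : t + (p + q) = (t + p) + q := by ring
      rw [h1, hq, hp]
    | neg p _ hp =>
      intro t
      have h1 : G ((t + -p) + p) = G (t + -p) := hp (t + -p)
      simpa using h1.symm
  have hGconst : ∀ t, G t = G 0 := by
    have heqon : Set.EqOn G (fun _ => G 0)
        ((AddSubgroup.closure ({x₂, x₃} : Set ℝ) : AddSubgroup ℝ) : Set ℝ) := by
      intro p hp
      have := hinv p hp 0
      simpa using this
    have heq := Continuous.ext_on hdense hGcont continuous_const heqon
    intro t
    exact congrFun heq t
  have hgG : ∀ T, 0 ≤ T → g T = G T := by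
    intro T hT
    have := hG T 0 (by simpa using hT)
    simpa using this.symm
  have hgconst : ∀ T, 0 ≤ T → g T = g 0 := by
    intro T hT
    rw [hgG T hT, hGconst T, ← hgG 0 le_rfl]
  have hρform : ∀ T, 0 ≤ T → ρ T = ρ 0 * Real.exp (-β * T) := by
    intro T hT
    have h1 : Real.log (ρ T) + β * T = Real.log (ρ 0) + β * 0 := hgconst T hT
    have h2 : ρ T = Real.exp (Real.log (ρ 0) + -β * T) := by
      rw [← Real.exp_log (hpos T hT)]
      congr 1
      linarith
    rw [h2, Real.exp_add, Real.exp_log (hpos 0 le_rfl)]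
  have hβx₃ : β * x₃ = Real.log A₃ := by
    have := hc0
    rw [hcdef] at this
    linarith
  have hne : x₂ - x₃ ≠ 0 := by
    intro h
    have hx : x₂ = x₃ := by linarith
    apply hirr
    exact ⟨1, by rw [hx, div_self hx₃.ne']; norm_num⟩
  have hβ' : (Real.log A₂ - Real.log A₃) / (x₂ - x₃) = β := by
    rw [← hβx₂, ← hβx₃, ← mul_sub]
    exact mul_div_cancel_right₀ _ hne
  -- integrability
  have hint : IntegrableOn ρ (Set.Ioi (0:ℝ)) := by
    by_contra h
    rw [MeasureTheory.integral_undef h] at hdens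
    norm_num at hdens
  have hρ0 := hpos 0 le_rfl
  have hβpos : 0 < β := by
    by_contra hb
    push_neg at hb
    obtain ⟨n, hn⟩ := exists_nat_gt (1 / ρ 0)
    have hsub : Set.Ioc (0:ℝ) (n:ℝ) ⊆ Set.Ioi 0 := Set.Ioc_subset_Ioi_self
    have hint2 : IntegrableOn ρ (Set.Ioc (0:ℝ) (n:ℝ)) := hint.mono_set hsub
    have hlb : ∀ x ∈ Set.Ioc (0:ℝ) (n:ℝ), ρ 0 ≤ ρ x := by
      intro x hx
      rw [hρform x hx.1.le]
      have hex : 1 ≤ Real.exp (-β * x) := by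
        rw [Real.one_le_exp_iff]
        nlinarith [hx.1]
      nlinarith
    have h1 : ∫ _ in Set.Ioc (0:ℝ) (n:ℝ), ρ 0 ≤ ∫ x in Set.Ioc (0:ℝ) (n:ℝ), ρ x :=
      setIntegral_mono_on (integrableOn_const measure_Ioc_lt_top.ne) hint2
        measurableSet_Ioc hlb
    have h2 : ∫ x in Set.Ioc (0:ℝ) (n:ℝ), ρ x ≤ ∫ x in Set.Ioi (0:ℝ), ρ x :=
      setIntegral_mono_set hint
        (ae_restrict_of_forall_mem measurableSet_Ioi (fun x hx => (hpos x (le_of_lt hx)).le))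
        (HasSubset.Subset.eventuallyLE hsub)
    have h3 : ∫ _ in Set.Ioc (0:ℝ) (n:ℝ), ρ 0 = (n:ℝ) * ρ 0 := by
      rw [setIntegral_const, Real.volume_real_Ioc]
      simp [ENNReal.toReal_ofReal (Nat.cast_nonneg n : (0:ℝ) ≤ n)]
    rw [h3] at h1
    rw [hdens] at h2
    rw [div_lt_iff₀ hρ0] at hn
    nlinarith
  have hIexp : ∫ x in Set.Ioi (0:ℝ), Real.exp (-(β * x)) = β⁻¹ := by
    have h := integral_comp_mul_left_Ioi (fun y => Real.exp (-y)) 0 hβpos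
    simp only [mul_zero] at h
    rw [integral_exp_neg_Ioi] at h
    simpa using h
  have hI : ∫ x in Set.Ioi (0:ℝ), ρ 0 * Real.exp (-β * x) = ρ 0 * β⁻¹ := by
    rw [MeasureTheory.integral_const_mul]
    congr 1
    simpa [neg_mul] using hIexp
  have hρ0β : ρ 0 = β := by
    have hcongr : ∫ x in Set.Ioi (0:ℝ), ρ x = ∫ x in Set.Ioi (0:ℝ), ρ 0 * Real.exp (-β * x) :=
      setIntegral_congr_fun measurableSet_Ioi (fun x hx => hρform x (le_of_lt hx))
    rw [hcongr, hI] at hdens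
    field_simp at hdens
    linarith
  constructor
  · intro T hT
    rw [hβ', hρform T hT, hρ0β]
  · rw [Real.rpow_def_of_pos hA₂, Real.rpow_def_of_pos hA₃]
    congr 1
    rw [← hβx₂, ← hβx₃]
    ring
end

section
/- If a continuous function ρ : [0,∞) → (0,∞) satisfies ρ(T + x) = c(x) ρ(T) for all T ≥ 0 and all x in a set S of positive reals whose generated additive subgroup is dense in ℝ, for some function c : S → (0,∞), then there exist constants C > 0 and β ∈ ℝ with ρ(T) = C e^{−βT} for all T ≥ 0. -/
/-- If a continuous positive ρ on [0,∞) satisfies ρ(T+x) = c(x) ρ(T) for all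
T ≥ 0 and all x in a set S of positive reals generating a dense additive subgroup of ℝ,
then ρ(T) = C e^{−βT} for some C > 0 and β ∈ ℝ. -/
theorem dense_shift_relations_force_exponential
    (ρ : ℝ → ℝ) (S : Set ℝ) (c : ℝ → ℝ)
    (hS : S ⊆ Set.Ioi 0)
    (hdense : Dense ((AddSubgroup.closure S : AddSubgroup ℝ) : Set ℝ))
    (hc : ∀ x ∈ S, 0 < c x)
    (hpos : ∀ T, 0 ≤ T → 0 < ρ T)
    (hcont : ContinuousOn ρ (Set.Ici 0))
    (heq : ∀ x ∈ S, ∀ T, 0 ≤ T → ρ (T + x) = c x * ρ T) :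
    ∃ C > 0, ∃ β : ℝ, ∀ T, 0 ≤ T → ρ T = C * Real.exp (-β * T) := by
  have hρ0 : 0 < ρ 0 := hpos 0 le_rfl
  -- Step 1: multiplicative Cauchy equation on the half line
  have key : ∀ t, 0 ≤ t → ∀ s, 0 ≤ s → ρ (s + t) * ρ 0 = ρ s * ρ t := by
    intro t ht
    set ψ : ℝ → ℝ := fun s => ρ (s + t) / ρ s with hψdef
    have hψcont : ContinuousOn ψ (Set.Ici 0) := by
      apply ContinuousOn.div
      · exact hcont.comp (by fun_prop) (fun s hs => by
          simp only [Set.mem_Ici] at *; linarith)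
      · exact hcont
      · intro s hs; exact (hpos s hs).ne'
    -- the set of "periods" of ψ is an additive subgroup containing S
    let H : AddSubgroup ℝ :=
      { carrier := {g | ∀ s, 0 ≤ s → 0 ≤ s + g → ψ (s + g) = ψ s}
        zero_mem' := by intro s hs _; simp
        add_mem' := by
          intro a b ha hb s hs hsab
          rcases le_or_gt 0 b with hb0 | hb0
          · have h1 : 0 ≤ s + b := by linarith
            rw [show s + (a + b) = s + b + a by ring, ha (s + b) h1 (by linarith),
              hb s hs h1]
          · rcases le_or_gt 0 a with ha0 | ha0
            · have h1 : 0 ≤ s + a := by linarith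
              rw [show s + (a + b) = s + a + b by ring, hb (s + a) h1 (by linarith),
                ha s hs h1]
            · have h1 : 0 ≤ s + a := by linarith
              rw [show s + (a + b) = s + a + b by ring, hb (s + a) h1 (by linarith),
                ha s hs h1]
        neg_mem' := by
          intro a ha s hs hsa
          have h := ha (s + -a) hsa (by linarith)
          rw [show s + -a + a = s by ring] at h
          exact h.symm }
    have hSH : (AddSubgroup.closure S : AddSubgroup ℝ) ≤ H := by
      rw [AddSubgroup.closure_le]
      intro x hx s hs hsx
      have hx0 : 0 < x := hS hx
      show ψ (s + x) = ψ s
      have h1 : 0 ≤ s + t := by linarith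
      simp only [hψdef]
      rw [show s + x + t = s + t + x by ring, heq x hx (s + t) h1, heq x hx s hs,
        mul_div_mul_left _ _ (hc x hx).ne']
    have hHdense : Dense (H : Set ℝ) :=
      hdense.mono (by exact_mod_cast hSH)
    have hconst : ∀ s, 0 ≤ s → ψ s = ψ 0 := by
      intro s hs
      rcases eq_or_lt_of_le hs with h0 | h0
      · rw [← h0]
      · have hsub : Set.Ioi (0:ℝ) ⊆ closure (Set.Ioi 0 ∩ (H : Set ℝ)) :=
          hHdense.open_subset_closure_inter isOpen_Ioi
        have hmem : s ∈ closure (Set.Ioi 0 ∩ (H : Set ℝ)) := hsub h0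
        have hne : (nhdsWithin s (Set.Ioi 0 ∩ (H : Set ℝ))).NeBot :=
          mem_closure_iff_nhdsWithin_neBot.mp hmem
        have h1 : Filter.Tendsto ψ (nhdsWithin s (Set.Ioi 0 ∩ (H : Set ℝ))) (nhds (ψ s)) :=
          (hψcont s (le_of_lt h0)).tendsto.mono_left
            (nhdsWithin_mono s (fun x hx => Set.mem_Ici.mpr (le_of_lt hx.1)))
        have h2 : Filter.Tendsto ψ (nhdsWithin s (Set.Ioi 0 ∩ (H : Set ℝ))) (nhds (ψ 0)) := by
          apply Filter.Tendsto.congr' _ tendsto_const_nhds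
          filter_upwards [self_mem_nhdsWithin] with x hx
          have := hx.2 0 le_rfl (by simpa using le_of_lt hx.1)
          simpa using this.symm
        exact tendsto_nhds_unique h1 h2
    intro s hs
    have h := hconst s hs
    simp only [hψdef, zero_add] at h
    rw [div_eq_div_iff (hpos s hs).ne' hρ0.ne'] at h
    linarith
  -- Step 2: the additive function G and its extension F to ℝ
  set G : ℝ → ℝ := fun u => Real.log (ρ u) - Real.log (ρ 0) with hGdef
  have hGadd : ∀ s, 0 ≤ s → ∀ u, 0 ≤ u → G (s + u) = G s + G u := by
    intro s hs u hu
    have h := key u hu s hs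
    have := Real.log_mul (hpos (s + u) (by linarith)).ne' hρ0.ne'
    have h2 : Real.log (ρ (s + u) * ρ 0) = Real.log (ρ s * ρ u) := by rw [h]
    rw [Real.log_mul (hpos (s + u) (by linarith)).ne' hρ0.ne',
      Real.log_mul (hpos s hs).ne' (hpos u hu).ne'] at h2
    simp only [hGdef]; linarith
  have hG0 : G 0 = 0 := by simp [hGdef]
  have hGcont : ContinuousOn G (Set.Ici 0) := by
    apply ContinuousOn.sub _ continuousOn_const
    exact Real.continuousOn_log.comp hcont (fun x hx => (hpos x hx).ne')
  set F : ℝ → ℝ := fun u => G (max u 0) - G (max (-u) 0) with hFdef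
  have hFnn : ∀ u, 0 ≤ u → F u = G u := by
    intro u hu
    simp only [hFdef]
    rw [max_eq_left hu, max_eq_right (by linarith), hG0, sub_zero]
  have hFnp : ∀ u, u ≤ 0 → F u = -G (-u) := by
    intro u hu
    simp only [hFdef]
    rw [max_eq_right hu, max_eq_left (by linarith), hG0, zero_sub]
  have hFadd : ∀ a b, F (a + b) = F a + F b := by
    have main : ∀ a b : ℝ, 0 ≤ a → F (a + b) = F a + F b := by
      intro a b ha
      rcases le_or_gt 0 b with hb | hb
      · rw [hFnn a ha, hFnn b hb, hFnn (a + b) (by linarith), hGadd a ha b hb]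
      · rcases le_or_gt 0 (a + b) with hab | hab
        · have h := hGadd (a + b) hab (-b) (by linarith)
          rw [show a + b + -b = a by ring] at h
          rw [hFnn a ha, hFnp b (le_of_lt hb), hFnn (a + b) hab]
          linarith
        · have h := hGadd a ha (-(a + b)) (by linarith)
          rw [show a + -(a + b) = -b by ring] at h
          rw [hFnn a ha, hFnp b (le_of_lt hb), hFnp (a + b) (le_of_lt hab)]
          linarith
    intro a b
    rcases le_or_gt 0 a with ha | ha
    · exact main a b ha
    · rcases le_or_gt 0 b with hb | hb
      · rw [add_comm, main b a hb, add_comm]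
      · have h := hGadd (-a) (by linarith) (-b) (by linarith)
        rw [hFnp a (le_of_lt ha), hFnp b (le_of_lt hb), hFnp (a + b) (by linarith),
          show -(a + b) = -a + -b by ring]
        linarith
  have hFcont : Continuous F := by
    apply Continuous.sub
    · exact hGcont.comp_continuous (by fun_prop) (fun x => Set.mem_Ici.mpr (le_max_right _ _))
    · exact hGcont.comp_continuous (by fun_prop) (fun x => Set.mem_Ici.mpr (le_max_right _ _))
  set Fhom : ℝ →+ ℝ := AddMonoidHom.mk' F hFadd with hFhom
  have hlin : ∀ x : ℝ, F x = x * F 1 := by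
    intro x
    have h := (Fhom.toRealLinearMap hFcont).map_smul x 1
    simp only [AddMonoidHom.coe_toRealLinearMap, smul_eq_mul, mul_one] at h
    simpa [hFhom] using h
  refine ⟨ρ 0, hρ0, -(F 1), ?_⟩
  intro T hT
  have h1 : G T = T * F 1 := by rw [← hFnn T hT, hlin]
  have h2 : Real.log (ρ T) = Real.log (ρ 0) + T * F 1 := by
    simp only [hGdef] at h1; linarith
  have := Real.exp_log (hpos T hT)
  rw [← this, h2, Real.exp_add, Real.exp_log hρ0]
  ring_nf
end

section
/- Let V be a finite set of types with a rate matrix a = (a_{ij}), and suppose positive numbers p_1, …, p_V satisfy, for every m ∈ {1,…,V} and every j ≤ m, the partial balance equations Σ_{i=1}^m p_i a_{ij} = p_j Σ_{i=1}^m a_{ji}. Then detailed balance holds: p_i a_{ij} = p_j a_{ji} for all i, j. -/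
open Finset

/-- If positive p_i satisfy the partial balance equations
Σ_{i ≤ m} p_i a_{ij} = p_j Σ_{i ≤ m} a_{ji} for every truncation level m and every j ≤ m,
then detailed balance holds: p_i a_{ij} = p_j a_{ji} for all i, j. -/
theorem partial_balance_implies_detailed_balance
    {V : ℕ} (p : Fin V → ℝ) (a : Fin V → Fin V → ℝ)
    (hp : ∀ v, 0 < p v)
    (ha : ∀ i j, i ≠ j → 0 ≤ a i j)
    (hbal : ∀ m : Fin V, ∀ j : Fin V, j ≤ m →
      ∑ i ∈ univ.filter (· ≤ m), p i * a i j = p j * ∑ i ∈ univ.filter (· ≤ m), a j i) :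
    ∀ i j, p i * a i j = p j * a j i := by
  have key : ∀ i j : Fin V, j < i → p i * a i j = p j * a j i := by
    intro i j hji
    have hi0 : 0 < i.val := Nat.lt_of_le_of_lt (Nat.zero_le _) hji
    have hi' : i.val - 1 < V := Nat.lt_of_le_of_lt (Nat.sub_le _ _) i.isLt
    set i' : Fin V := ⟨i.val - 1, hi'⟩ with hi'def
    have hset : univ.filter (· ≤ i) = insert i (univ.filter (· ≤ i')) := by
      ext k
      simp only [mem_filter, mem_univ, true_and, mem_insert, Fin.le_def, Fin.ext_iff,
        hi'def]
      omega
    have hnot : i ∉ univ.filter (· ≤ i') := by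
      simp only [mem_filter, mem_univ, true_and, Fin.le_def, hi'def]
      omega
    have h1 := hbal i j (le_of_lt hji)
    have h2 := hbal i' j (by simp only [Fin.le_def, hi'def]; omega)
    rw [hset, sum_insert hnot, sum_insert hnot, mul_add] at h1
    linarith
  intro i j
  rcases lt_trichotomy i j with h | h | h
  · exact (key j i h).symm
  · rw [h]
  · exact key i j h
end
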